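/- arXiv:1304.3699 — 4 statements merged into one kernel-verified Lean document; each statement's English description precedes it below -/
import Mathlib

section
/- Let K be an algebraically closed valued field with valuation ring 𝒪, maximal ideal 𝓜, residue map res, and a coefficient field k ⊆ 𝒪 (so res is the identity on k). Suppose the transcendence degree of K over k is κ. Then 𝓜 contains a subset of cardinality κ that is algebraically independent over k; in other words, 𝓜 = res⁻¹(0) contains a transcendence basis of K over k. -/
/-!
The algebraically independent subsets of `K` over `k` are the independent sets of a matroid whose
closure operator is "algebraic over the `k`-algebra generated by". Replacing every element `x` of
a basis by an element `φ x` with `φ x ∈ cl {x}` and `x ∈ cl {φ x}` preserves independence and the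
closure, hence yields a basis again, of the same cardinality. For `x ∈ 𝒪` take `φ x = x - b` with
`b ∈ k` a lift of `res x`; otherwise `x⁻¹ ∈ 𝓜`, and take `φ x = x⁻¹`.
-/

open Cardinal Set AlgebraicIndependent

namespace Matroid

variable {α : Type*} {M : Matroid α} {X I B : Set α} {φ : α → α}

lemma closure_image_eq_of_mem_closure_singleton
    (hφ : ∀ x ∈ X, φ x ∈ M.closure {x}) (hφ' : ∀ x ∈ X, x ∈ M.closure {φ x}) :
    M.closure (φ '' X) = M.closure X := by
  refine subset_antisymm (closure_subset_closure_of_subset_closure ?_)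
    (closure_subset_closure_of_subset_closure ?_)
  · rintro _ ⟨x, hx, rfl⟩
    exact M.closure_subset_closure (singleton_subset_iff.2 hx) (hφ x hx)
  · intro x hx
    exact M.closure_subset_closure (singleton_subset_iff.2 (mem_image_of_mem φ hx)) (hφ' x hx)

lemma Indep.image_of_mem_closure_singleton (hI : M.Indep I)
    (hφ : ∀ x ∈ I, φ x ∈ M.closure {x}) (hφ' : ∀ x ∈ I, x ∈ M.closure {φ x}) :
    InjOn φ I ∧ M.Indep (φ '' I) := by
  have hsep : ∀ x ∈ I, φ x ∉ M.closure (φ '' (I \ {x})) := by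
    intro x hx hmem
    rw [closure_image_eq_of_mem_closure_singleton (fun y hy => hφ y hy.1)
      (fun y hy => hφ' y hy.1)] at hmem
    exact hI.notMem_closure_sdiff_of_mem hx
      (closure_subset_closure_of_subset_closure (singleton_subset_iff.2 hmem) (hφ' x hx))
  refine ⟨fun x hx y hy hxy => by_contra fun hne => hsep x hx ?_, ?_⟩
  · rw [hxy]
    exact M.mem_closure_of_mem' ⟨y, ⟨hy, Ne.symm hne⟩, rfl⟩
      (mem_ground_of_mem_closure (hφ y hy))
  · refine indep_iff_forall_notMem_closure_sdiff'.2 ⟨?_, ?_⟩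
    · rintro _ ⟨x, hx, rfl⟩
      exact mem_ground_of_mem_closure (hφ x hx)
    · rintro _ ⟨x, hx, rfl⟩ hmem
      refine hsep x hx (M.closure_subset_closure ?_ hmem)
      rintro _ ⟨⟨y, hy, rfl⟩, hne⟩
      exact ⟨y, ⟨hy, fun hyx => hne (hyx ▸ rfl)⟩, rfl⟩

lemma IsBase.image_of_mem_closure_singleton (hB : M.IsBase B)
    (hφ : ∀ x ∈ B, φ x ∈ M.closure {x}) (hφ' : ∀ x ∈ B, x ∈ M.closure {φ x}) :
    InjOn φ B ∧ M.IsBase (φ '' B) := by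
  obtain ⟨hinj, hindep⟩ := hB.indep.image_of_mem_closure_singleton hφ hφ'
  refine ⟨hinj, hindep.isBase_of_ground_subset_closure ?_⟩
  rw [closure_image_eq_of_mem_closure_singleton hφ hφ', hB.closure_eq]

end Matroid

namespace AlgebraicIndependent

variable {R A : Type*} [CommRing R]

lemma mem_matroid_closure_of_mem_adjoin [CommRing A] [IsDomain A] [Algebra R A]
    [FaithfulSMul R A] {s : Set A} {a : A} (ha : a ∈ Algebra.adjoin R s) :
    a ∈ (matroid R A).closure s := by
  rw [matroid_closure_eq]
  exact isAlgebraic_algebraMap (⟨a, ha⟩ : Algebra.adjoin R s)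

lemma inv_mem_matroid_closure_singleton [Field A] [Algebra R A] [FaithfulSMul R A] (x : A) :
    x⁻¹ ∈ (matroid R A).closure {x} := by
  rw [matroid_closure_eq]
  exact (isAlgebraic_algebraMap (⟨x, Algebra.subset_adjoin rfl⟩ : Algebra.adjoin R {x})).inv

end AlgebraicIndependent

lemma ValuationSubring.exists_valuation_lt_one_mutually_algebraic {K : Type*} [Field K]
    (O : ValuationSubring K) (k : Subfield K)
    (hres : ∀ x ∈ O, ∃ b ∈ k, O.valuation (x - b) < 1) (x : K) :
    ∃ y, O.valuation y < 1 ∧ y ∈ (matroid k K).closure {x} ∧ x ∈ (matroid k K).closure {y} := by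
  by_cases hx : x ∈ O
  · obtain ⟨b, hbk, hb⟩ := hres x hx
    have hb_mem : ∀ z : K, b ∈ Algebra.adjoin k {z} := fun z =>
      Subalgebra.algebraMap_mem _ (⟨b, hbk⟩ : k)
    refine ⟨x - b, hb, mem_matroid_closure_of_mem_adjoin ?_, mem_matroid_closure_of_mem_adjoin ?_⟩
    · exact sub_mem (Algebra.subset_adjoin rfl) (hb_mem x)
    · simpa using (Algebra.adjoin k {x - b}).add_mem (Algebra.subset_adjoin rfl) (hb_mem _)
  · have hv : 1 < O.valuation x := by
      rwa [← not_le, valuation_le_one_iff]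
    refine ⟨x⁻¹, ?_, inv_mem_matroid_closure_singleton x, by
      simpa using inv_mem_matroid_closure_singleton (R := k) x⁻¹⟩
    rw [map_inv₀]
    exact inv_lt_one_of_one_lt₀ hv

theorem stmt5_general {K : Type*} [Field K] (O : ValuationSubring K)
    (k : Subfield K)
    (hres : ∀ x ∈ O, ∃ b ∈ k, O.valuation (x - b) < 1)
    {κ : Cardinal}
    (htr : ∃ s : Set K, IsTranscendenceBasis k ((↑) : s → K) ∧ #s = κ) :
    ∃ s : Set K, (∀ x ∈ s, O.valuation x < 1) ∧
      IsTranscendenceBasis k ((↑) : s → K) ∧ #s = κ := by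
  obtain ⟨s, hs, rfl⟩ := htr
  choose φ hφO hφ hφ' using O.exists_valuation_lt_one_mutually_algebraic k hres
  obtain ⟨hinj, hbase⟩ := (matroid_isBase_iff.2 hs).image_of_mem_closure_singleton
    (fun x _ => hφ x) (fun x _ => hφ' x)
  exact ⟨φ '' s, forall_mem_image.2 fun x _ => hφO x, matroid_isBase_iff.1 hbase,
    mk_image_eq_of_injOn φ s hinj⟩

/-- If `K` is an algebraically closed valued field with coefficient field `k` and
`trdeg(K/k) = κ`, then the maximal ideal `𝓜 = {x | v x < 1}` of the valuation ring contains
a transcendence basis of `K` over `k`, of cardinality `κ`. -/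
theorem stmt5 {K : Type*} [Field K] [IsAlgClosed K] (O : ValuationSubring K)
    (k : Subfield K) (hk : ∀ a ∈ k, a ∈ O)
    (hres : ∀ x ∈ O, ∃ b ∈ k, O.valuation (x - b) < 1)
    {κ : Cardinal}
    (htr : ∃ s : Set K, IsTranscendenceBasis k ((↑) : s → K) ∧ #s = κ) :
    ∃ s : Set K, (∀ x ∈ s, O.valuation x < 1) ∧
      IsTranscendenceBasis k ((↑) : s → K) ∧ #s = κ :=
  stmt5_general O k hres htr
end

section
/- Let K be an algebraically closed valued field with coefficient field k, valuation ideal 𝓜, and suppose tr.deg(K/k) = κ for an infinite cardinal κ. Then for every b ∈ k the coset b + 𝓜 has cardinality at least κ; in particular, b + 𝓜 contains an element transcendental over any subfield F₀ ⊆ K with |F₀| < κ containing k. -/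
open Cardinal

open MvPolynomial
private lemma aux_sub {K : Type*} [Field K] (k : Subfield K) {s : Set K}
    (hs : AlgebraicIndependent k ((↑) : s → K)) {t t' : s} (d : k)
    (h : (t : K) - (t' : K) = (d : K)) : t = t' := by
  classical
  by_contra hne
  have h0 : (X t - X t' - C d : MvPolynomial s k) = 0 := by
    apply hs
    simp only [map_sub, aeval_X, aeval_C, map_zero]
    rw [show (algebraMap k K) d = (d : K) from rfl, ← h]
    ring
  have hc := congrArg (coeff (Finsupp.single t 1)) h0
  simp only [coeff_sub, coeff_zero, coeff_X] at hc
  rw [coeff_C, if_neg (show ¬ (Finsupp.single t' 1 = Finsupp.single t 1) by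
      simp [Finsupp.single_eq_single_iff, Ne.symm hne]),
    if_neg (show ¬ ((0 : s →₀ ℕ) = Finsupp.single t 1) from
      fun hh => one_ne_zero (Finsupp.single_eq_zero.mp hh.symm))] at hc
  simp at hc

private lemma aux_inv {K : Type*} [Field K] (k : Subfield K) {s : Set K}
    (hs : AlgebraicIndependent k ((↑) : s → K)) {t t' : s}
    (ht : (t : K) ≠ 0) (ht' : (t' : K) ≠ 0) (d : k)
    (h : (t : K)⁻¹ - (t' : K)⁻¹ = (d : K)) : t = t' := by
  classical
  by_contra hne
  have hrel : (t' : K) - (t : K) - (d : K) * t * t' = 0 := by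
    field_simp at h
    linear_combination h
  have h0 : (X t' - X t - C d * X t * X t' : MvPolynomial s k) = 0 := by
    apply hs
    simp only [map_sub, map_mul, aeval_X, aeval_C, map_zero]
    rw [show (algebraMap k K) d = (d : K) from rfl]
    exact hrel
  have hmono : (C d * X t * X t' : MvPolynomial s k)
      = monomial (Finsupp.single t 1 + Finsupp.single t' 1) d := by
    rw [C_apply, X, X, monomial_mul, monomial_mul]
    simp
  have hc := congrArg (coeff (Finsupp.single t' 1)) h0
  rw [hmono] at hc
  have hne2 : Finsupp.single t 1 + Finsupp.single t' 1 ≠ Finsupp.single t' 1 := by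
    intro hh
    have := DFunLike.congr_fun hh t
    simp [Finsupp.single_apply, hne, Ne.symm hne] at this
  simp only [coeff_sub, coeff_zero, coeff_X] at hc
  rw [coeff_monomial, if_neg (show ¬ (Finsupp.single t 1 = Finsupp.single t' 1) by
      simp [Finsupp.single_eq_single_iff, hne]),
    if_neg hne2] at hc
  simp at hc

/-- If `K` is an algebraically closed valued field with coefficient field `k` and
`trdeg(K/k) = κ` infinite, then for every `b ∈ k` the coset `b + 𝓜` has cardinality at
least `κ`, and for any subfield `F₀` containing `k` with `|F₀| < κ`, the coset `b + 𝓜`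
contains an element transcendental over `F₀`. -/
theorem stmt7 {K : Type*} [Field K] [IsAlgClosed K] (O : ValuationSubring K)
    (k : Subfield K) (hk : ∀ a ∈ k, a ∈ O)
    (hres : ∀ x ∈ O, ∃ b ∈ k, O.valuation (x - b) < 1)
    {κ : Cardinal} (hκ : ℵ₀ ≤ κ)
    (htr : ∃ s : Set K, IsTranscendenceBasis k ((↑) : s → K) ∧ #s = κ)
    (b : K) (hb : b ∈ k) :
    κ ≤ #{y : K | O.valuation (y - b) < 1} ∧
    ∀ F₀ : Subfield K, k ≤ F₀ → #F₀ < κ →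
      ∃ a : K, O.valuation (a - b) < 1 ∧ Transcendental F₀ a := by
  classical
  obtain ⟨s, hs, hcard⟩ := htr
  have hind : AlgebraicIndependent k ((↑) : s → K) := hs.1
  choose c hck hcv using hres
  set S : Set K := {y : K | O.valuation (y - b) < 1} with hSdef
  -- first part: κ ≤ #S
  have main : κ ≤ #S := by
    set s₁ : Set s := {t : s | (t : K) ∈ O} with hs₁
    have hsplit : #s₁ + #(s₁ᶜ : Set s) = κ := by
      rw [Cardinal.mk_sum_compl, hcard]
    rcases le_or_gt κ #s₁ with hc | hc
    · have inj : ∃ f : s₁ → S, Function.Injective f := by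
        refine ⟨fun t => ⟨(t : K) - c t t.2 + b, ?_⟩, ?_⟩
        · show O.valuation ((t : K) - c t t.2 + b - b) < 1
          simpa using hcv _ t.2
        · intro t t' hEq
          have h1 : (t : K) - c t t.2 + b = (t' : K) - c t' t'.2 + b :=
            congrArg Subtype.val hEq
          have h2 : ((t : s) : K) - ((t' : s) : K)
              = ((⟨c t t.2, hck _ _⟩ - ⟨c t' t'.2, hck _ _⟩ : k) : K) := by
            push_cast
            linear_combination h1
          exact Subtype.ext (aux_sub k hind _ h2)
      obtain ⟨f, hf⟩ := inj
      exact hc.trans (Cardinal.mk_le_of_injective hf)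
    · have hc2 : κ ≤ #(s₁ᶜ : Set s) := by
        by_contra hc2
        push_neg at hc2
        exact absurd hsplit (ne_of_lt (Cardinal.add_lt_of_lt hκ hc hc2))
      have hmem : ∀ t : (s₁ᶜ : Set s), ((t : s) : K)⁻¹ ∈ O := fun t => by
        rcases O.mem_or_inv_mem ((t : s) : K) with h | h
        · exact absurd h t.2
        · exact h
      have hne0 : ∀ t : (s₁ᶜ : Set s), ((t : s) : K) ≠ 0 := fun t h0 =>
        t.2 (by simp only [hs₁, Set.mem_setOf_eq, h0]; exact O.zero_mem)
      have inj : ∃ f : (s₁ᶜ : Set s) → S, Function.Injective f := by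
        refine ⟨fun t => ⟨((t : s) : K)⁻¹ - c _ (hmem t) + b, ?_⟩, ?_⟩
        · show O.valuation (((t : s) : K)⁻¹ - c _ (hmem t) + b - b) < 1
          simpa using hcv _ (hmem t)
        · intro t t' hEq
          have h1 : ((t : s) : K)⁻¹ - c _ (hmem t) + b
              = ((t' : s) : K)⁻¹ - c _ (hmem t') + b := congrArg Subtype.val hEq
          have h2 : ((t : s) : K)⁻¹ - ((t' : s) : K)⁻¹
              = ((⟨c _ (hmem t), hck _ _⟩ - ⟨c _ (hmem t'), hck _ _⟩ : k) : K) := by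
            push_cast
            linear_combination h1
          exact Subtype.ext (aux_inv k hind (hne0 t) (hne0 t') _ h2)
      obtain ⟨f, hf⟩ := inj
      exact hc2.trans (Cardinal.mk_le_of_injective hf)
  -- an explicit element of the coset transcendental over k
  have helper : ∃ a : K, O.valuation (a - b) < 1 ∧ Transcendental k a := by
    have hsne : Nonempty s := Cardinal.mk_ne_zero_iff.mp (by
      rw [hcard]; exact (Cardinal.aleph0_pos.trans_le hκ).ne')
    obtain ⟨t⟩ := hsne
    have htk : Transcendental k ((t : K)) := hind.transcendental t
    rcases O.mem_or_inv_mem (t : K) with hO | hO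
    · refine ⟨(t : K) - c _ hO + b, by simpa using hcv _ hO, fun halg => ?_⟩
      apply htk
      have hbk : IsIntegral k b := isIntegral_algebraMap (x := (⟨b, hb⟩ : k))
      have hckk : IsIntegral k (c _ hO) := isIntegral_algebraMap (x := (⟨c _ hO, hck _ _⟩ : k))
      have : IsIntegral k (((t : K) - c _ hO + b) - b + c _ hO) :=
        ((isAlgebraic_iff_isIntegral.mp halg).sub hbk).add hckk
      have := isAlgebraic_iff_isIntegral.mpr this
      simpa using this
    · refine ⟨(t : K)⁻¹ - c _ hO + b, by simpa using hcv _ hO, fun halg => ?_⟩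
      apply htk
      have hbk : IsIntegral k b := isIntegral_algebraMap (x := (⟨b, hb⟩ : k))
      have hckk : IsIntegral k (c _ hO) := isIntegral_algebraMap (x := (⟨c _ hO, hck _ _⟩ : k))
      have h1 : IsIntegral k ((((t : K)⁻¹ - c _ hO + b) - b + c _ hO)) :=
        ((isAlgebraic_iff_isIntegral.mp halg).sub hbk).add hckk
      have h2 : IsAlgebraic k ((t : K)⁻¹) := by
        simpa using isAlgebraic_iff_isIntegral.mpr h1
      simpa using h2.inv
  refine ⟨main, ?_⟩
  intro F₀ hle hFcard
  rcases lt_or_ge #F₀ ℵ₀ with hfin | hinf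
  · -- F₀ finite: algebraic over k, use the explicit element
    haveI : Finite F₀ := Cardinal.lt_aleph0_iff_finite.mp hfin
    obtain ⟨a, haS, hatr⟩ := helper
    refine ⟨a, haS, fun halg => ?_⟩
    letI : Algebra k F₀ := (Subfield.inclusion hle).toAlgebra
    haveI : IsScalarTower k F₀ K := IsScalarTower.of_algebraMap_eq fun x => rfl
    haveI : Algebra.IsIntegral k F₀ :=
      Algebra.isAlgebraic_iff_isIntegral.mp inferInstance
    exact hatr (isAlgebraic_iff_isIntegral.mpr
      (isIntegral_trans a (isAlgebraic_iff_isIntegral.mp halg)))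
  · -- F₀ infinite: counting argument
    by_contra hcon
    push_neg at hcon
    haveI : Module.IsTorsionFree F₀ K := inferInstance
    have halg : #{x : K // IsAlgebraic F₀ x} ≤ max #F₀ ℵ₀ :=
      Algebraic.cardinalMk_le_max F₀ K
    have hlt : #{x : K // IsAlgebraic F₀ x} < κ := by
      refine halg.trans_lt ?_
      rwa [max_eq_left hinf]
    have hSle : #S ≤ #{x : K // IsAlgebraic F₀ x} := by
      refine Cardinal.mk_le_of_injective
        (f := fun y : S => ⟨(y : K), not_not.mp (hcon y y.2)⟩) ?_
      intro y y' h
      simpa [Subtype.ext_iff] using h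
    exact absurd (main.trans hSle) (not_le.mpr hlt)
end

section
/- Let R be a subring of a field K and π : R → k a surjective ring homomorphism onto a field k. Then the kernel of π is a maximal ideal of R, and there exists a valuation ring 𝒪 of K with R ⊆ 𝒪 whose maximal ideal 𝓜 satisfies 𝓜 ∩ R = ker(π). -/
/-- Chevalley's place extension theorem: if `π : R → k` is a surjective ring homomorphism
from a subring `R` of a field `K` onto a field `k`, then `ker π` is a maximal ideal of `R`
and there is a valuation ring `𝒪` of `K` containing `R` whose maximal ideal
`𝓜 = {x | v x < 1}` satisfies `𝓜 ∩ R = ker π`. -/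
theorem stmt8 {K : Type*} [Field K] (R : Subring K) {k : Type*} [Field k]
    (π : R →+* k) (hπ : Function.Surjective π) :
    (RingHom.ker π).IsMaximal ∧
    ∃ O : ValuationSubring K, (R : Set K) ⊆ (O : Set K) ∧
      ∀ x : R, O.valuation (x : K) < 1 ↔ π x = 0 := by
  have hmax : (RingHom.ker π).IsMaximal := RingHom.ker_isMaximal_of_surjective π hπ
  refine ⟨hmax, ?_⟩
  set p := RingHom.ker π
  let L := Localization.AtPrime p
  have hunits : ∀ y : p.primeCompl, IsUnit ((R.subtype) (y : R)) := by
    rintro ⟨⟨y, hy⟩, hy2⟩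
    refine isUnit_iff_ne_zero.mpr ?_
    intro h
    apply hy2
    have : (⟨y, hy⟩ : R) = 0 := Subtype.ext h
    simp [p, this]
  let g : L →+* K := IsLocalization.lift (S := L) hunits
  obtain ⟨A, hmem, hloc⟩ := IsLocalRing.exists_factor_valuationRing g
  have hsub : ∀ x : R, (x : K) ∈ A := by
    intro x
    have := hmem (algebraMap R L x)
    simpa [g, IsLocalization.lift_eq] using this
  refine ⟨A, fun x hx => hsub ⟨x, hx⟩, ?_⟩
  intro x
  have hg : g.codRestrict A.toSubring hmem (algebraMap R L x) = ⟨(x : K), hsub x⟩ := by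
    ext
    simp [g, IsLocalization.lift_eq]
  rw [← ValuationSubring.valuation_lt_one_iff A ⟨(x : K), hsub x⟩]
  rw [IsLocalRing.mem_maximalIdeal, mem_nonunits_iff, ← hg]
  constructor
  · intro h
    by_contra hx0
    have : x ∈ p.primeCompl := hx0
    have := (IsLocalization.AtPrime.isUnit_to_map_iff L p x).mpr this
    exact h (this.map (g.codRestrict A.toSubring hmem))
  · intro h hu
    have := hloc.1 _ hu
    have hx : x ∈ p.primeCompl := (IsLocalization.AtPrime.isUnit_to_map_iff L p x).mp this
    exact hx h
end

section
/- Let K be an algebraically closed valued field with coefficient field k ⊆ 𝒪 and residue map res : 𝒪 → k identity on k, and suppose tr.deg(K/k) = κ with κ infinite. Let F₀ ⊆ K be a subfield with |F₀| < κ, and let b ∈ k. Then there exists a ∈ b + 𝓜 (i.e., res(a) = b) such that a is transcendental over F₀. -/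
/-!
If every element of `b + 𝓜` were algebraic over `F₀`, then so would be `b` and hence every
element of `𝓜`. When the valuation is nontrivial, `𝓜` contains some `m ≠ 0`, and every `x ∈ K`
is recovered from an element of `𝓜` (as `(x m) / m` if `x ∈ 𝒪`, as `(x⁻¹)⁻¹` otherwise), so `K`
would be algebraic over `F₀`, hence over `k(F₀)`, giving `trdeg(K/k) ≤ |F₀| < κ`. When the
valuation is trivial, `𝒪 = K` and `𝓜 = 0`, so the residue condition forces `K = k` and
`trdeg(K/k) = 0`.
-/

open Cardinal

namespace ValuationSubring

variable {K : Type*} [Field K] (O : ValuationSubring K)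

theorem mem_of_not_isNontrivial {k : Subfield K}
    (hres : ∀ x ∈ O, ∃ c ∈ k, O.valuation (x - c) < 1)
    (hO : ¬ O.valuation.IsNontrivial) (x : K) : x ∈ k := by
  obtain ⟨c, hc, hxc⟩ := hres x (O.eq_top_iff.2 hO ▸ trivial)
  have : O.valuation (x - c) = 0 := by
    by_contra h0
    exact hO ⟨x - c, h0, hxc.ne⟩
  rw [Valuation.zero_iff, sub_eq_zero] at this
  exact this ▸ hc

theorem isAlgebraic_of_forall_valuation_sub_lt_one {F : Type*} [Field F] [Algebra F K]
    (hO : O.valuation.IsNontrivial) {b : K}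
    (h : ∀ a, O.valuation (a - b) < 1 → IsAlgebraic F a) : Algebra.IsAlgebraic F K := by
  obtain ⟨m, hm0, hm⟩ := hO.exists_lt_one
  have hA : ∀ a, O.valuation a < 1 → b + a ∈ algebraicClosure F K := fun a ha =>
    mem_algebraicClosure_iff.2 (h _ (by rwa [add_sub_cancel_left]))
  have hb : b ∈ algebraicClosure F K := by simpa using hA 0 (by simp)
  have hsmall : ∀ a, O.valuation a < 1 → a ∈ algebraicClosure F K := fun a ha => by
    simpa using sub_mem (hA a ha) hb
  refine ⟨fun x => mem_algebraicClosure_iff.1 ?_⟩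
  by_cases hx : x ∈ O
  · have hxm : O.valuation (x * m) < 1 := by
      rw [map_mul]
      exact (mul_le_of_le_one_left' ((O.valuation_le_one_iff x).2 hx)).trans_lt hm
    simpa [hm0] using MulMemClass.mul_mem (hsmall _ hxm) (inv_mem (hsmall m hm))
  · have : O.valuation x⁻¹ < 1 := by
      rw [map_inv₀]
      exact inv_lt_one_of_one_lt₀ (not_le.1 fun h => hx (O.mem_of_valuation_le_one x h))
    simpa using inv_mem (hsmall _ this)

end ValuationSubring

theorem Subfield.isAlgebraic_adjoin {R K : Type*} [CommRing R] [Field K] [Algebra R K]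
    (F : Subfield K) [Algebra.IsAlgebraic F K] :
    Algebra.IsAlgebraic (Algebra.adjoin R (F : Set K)) K :=
  Algebra.IsAlgebraic.ringHom_of_comp_eq
    (F.subtype.codRestrict (Algebra.adjoin R (F : Set K)) fun x => Algebra.subset_adjoin x.2)
    (RingHom.id K) (RingHom.injective _) Function.surjective_id rfl

theorem Subfield.trdeg_le_cardinalMk {R K : Type*} [CommRing R] [Field K] [Algebra R K]
    (F : Subfield K) [Algebra.IsAlgebraic F K] : Algebra.trdeg R K ≤ #F :=
  have := F.isAlgebraic_adjoin (R := R)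
  Algebra.IsAlgebraic.trdeg_le_cardinalMk R (F : Set K)

theorem stmt12_general {K : Type*} [Field K] (O : ValuationSubring K)
    (k : Subfield K)
    (hres : ∀ x ∈ O, ∃ b ∈ k, O.valuation (x - b) < 1)
    {κ : Cardinal} (hκ : ℵ₀ ≤ κ)
    (htr : ∃ s : Set K, IsTranscendenceBasis k ((↑) : s → K) ∧ #s = κ)
    (F₀ : Subfield K) (hF₀ : #F₀ < κ) (b : K) :
    ∃ a : K, O.valuation (a - b) < 1 ∧ Transcendental F₀ a := by
  obtain ⟨s, hs, rfl⟩ := htr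
  by_contra! h
  have htrdeg : Algebra.trdeg k K < #s := by
    by_cases hO : O.valuation.IsNontrivial
    · have : Algebra.IsAlgebraic F₀ K :=
        O.isAlgebraic_of_forall_valuation_sub_lt_one hO fun a ha => not_not.1 (h a ha)
      exact F₀.trdeg_le_cardinalMk.trans_lt hF₀
    · have : Algebra.IsAlgebraic k K :=
        ⟨fun x => isAlgebraic_algebraMap (⟨x, O.mem_of_not_isNontrivial hres hO x⟩ : k)⟩
      rw [trdeg_eq_zero]
      exact aleph0_pos.trans_le hκ
  exact htrdeg.ne hs.cardinalMk_eq_trdeg.symm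

/-- Key step for `κ`-universality of the residue map: if `K` is an algebraically closed
valued field with coefficient field `k`, `trdeg(K/k) = κ` infinite, `F₀ ⊆ K` is a subfield
with `|F₀| < κ` and `b ∈ k`, then the infinitesimal neighbourhood `b + 𝓜` contains an
element transcendental over `F₀`. -/
theorem stmt12 {K : Type*} [Field K] [IsAlgClosed K] (O : ValuationSubring K)
    (k : Subfield K) (hk : ∀ a ∈ k, a ∈ O)
    (hres : ∀ x ∈ O, ∃ b ∈ k, O.valuation (x - b) < 1)
    {κ : Cardinal} (hκ : ℵ₀ ≤ κ)
    (htr : ∃ s : Set K, IsTranscendenceBasis k ((↑) : s → K) ∧ #s = κ)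
    (F₀ : Subfield K) (hF₀ : #F₀ < κ) (b : K) (hb : b ∈ k) :
    ∃ a : K, O.valuation (a - b) < 1 ∧ Transcendental F₀ a :=
  stmt12_general O k hres hκ htr F₀ hF₀ b
end
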